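/- Let ε > 0 and let S_ε(x) = (1/(2ε))·(e^{−|x|/ε} − 1 + |x|/ε). Let X : [0,1] × [0,∞) → ℝ be such that X(·,t) is nondecreasing on [0,1] for every t ≥ 0, t ↦ X(z,t) is differentiable for every z ∈ [0,1], and ∂_t X(z,t) = (2z − 1)/(2ε²) − ∫₀¹ S_ε'(X(z,t) − X(ζ,t)) dζ for all z ∈ [0,1] and t ≥ 0. Then for all 0 ≤ z₁ < z₂ ≤ 1 and all t ≥ 0, X(z₂,t) − X(z₁,t) ≥ e^{−t/(2ε³)}·(X(z₂,0) − X(z₁,0)) + 2ε·(z₂ − z₁)·(1 − e^{−t/(2ε³)}); in particular, X(·,t) is strictly increasing on [0,1] for every t > 0. -/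
import Mathlib


open MeasureTheory Real Set

/-- Derivative of the smooth convex part `S_ε(x) = (1/(2ε))(e^{-|x|/ε} - 1 + |x|/ε)`
of the Morse potential:  `S_ε'(x) = (sign(x)/(2ε²))(1 - e^{-|x|/ε})`. -/
noncomputable def Sderiv (ε x : ℝ) : ℝ :=
  (Real.sign x / (2 * ε ^ 2)) * (1 - Real.exp (-|x| / ε))

lemma measurable_realSign : Measurable Real.sign := by
  unfold Real.sign
  exact Measurable.ite (measurableSet_lt measurable_id measurable_const) measurable_const
    (Measurable.ite (measurableSet_lt measurable_const measurable_id) measurable_const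
      measurable_const)

lemma measurable_Sderiv (ε : ℝ) : Measurable (Sderiv ε) :=
  ((measurable_realSign.div measurable_const).mul
    (measurable_const.sub (((measurable_norm.neg).div measurable_const).exp)))

lemma Sderiv_zero (ε : ℝ) : Sderiv ε 0 = 0 := by simp [Sderiv]

lemma Sderiv_of_nonneg (ε : ℝ) {x : ℝ} (hx : 0 ≤ x) :
    Sderiv ε x = (1 - Real.exp (-x / ε)) / (2 * ε ^ 2) := by
  rcases eq_or_lt_of_le hx with h | h
  · simp [← h, Sderiv]
  · rw [Sderiv, Real.sign_of_pos h, abs_of_pos h]; ring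

lemma Sderiv_neg' (ε x : ℝ) : Sderiv ε (-x) = - Sderiv ε x := by
  rw [Sderiv, Sderiv, Real.sign_neg, abs_neg]; ring

lemma Sderiv_abs_le (ε : ℝ) (hε : 0 < ε) (x : ℝ) : |Sderiv ε x| ≤ 1 / (2 * ε ^ 2) := by
  have h1 : |Real.sign x| ≤ 1 := by
    rcases lt_trichotomy x 0 with h | h | h
    · rw [Real.sign_of_neg h]; norm_num
    · simp [h]
    · rw [Real.sign_of_pos h]; norm_num
  have h2 : Real.exp (-|x| / ε) ≤ 1 := Real.exp_le_one_iff.2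
    (div_nonpos_of_nonpos_of_nonneg (neg_nonpos.2 (abs_nonneg x)) hε.le)
  have h3 : 0 < Real.exp (-|x| / ε) := Real.exp_pos _
  have h4 : (0:ℝ) < 2 * ε ^ 2 := by positivity
  rw [Sderiv, abs_mul, abs_div, abs_of_pos h4,
    abs_of_nonneg (by linarith : (0:ℝ) ≤ 1 - Real.exp (-|x|/ε))]
  calc |Real.sign x| / (2 * ε ^ 2) * (1 - Real.exp (-|x| / ε))
      ≤ 1 / (2 * ε ^ 2) * 1 := by
        apply mul_le_mul (by gcongr) (by linarith) (by linarith) (by positivity)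
    _ = 1 / (2 * ε ^ 2) := by ring

lemma Sderiv_key_nonneg_case (ε : ℝ) (hε : 0 < ε) {a b : ℝ} (ha : 0 ≤ a) (hab : a ≤ b) :
    0 ≤ Sderiv ε b - Sderiv ε a ∧ Sderiv ε b - Sderiv ε a ≤ (b - a) / (2 * ε ^ 3) := by
  have hb : 0 ≤ b := ha.trans hab
  rw [Sderiv_of_nonneg ε ha, Sderiv_of_nonneg ε hb]
  have hu : Real.exp (-a / ε) ≤ 1 := Real.exp_le_one_iff.2
    (div_nonpos_of_nonpos_of_nonneg (by linarith) hε.le)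
  have hmono : Real.exp (-b / ε) ≤ Real.exp (-a / ε) := Real.exp_le_exp.2
    ((div_le_div_iff_of_pos_right hε).2 (by linarith))
  have hfac : Real.exp (-b / ε) = Real.exp (-a / ε) * Real.exp ((a - b) / ε) := by
    rw [← Real.exp_add]; congr 1; field_simp; ring
  have hlin := Real.add_one_le_exp ((a - b) / ε)
  have hp : 0 < Real.exp (-a / ε) := Real.exp_pos _
  have hp2 : 0 < Real.exp ((a-b)/ε) := Real.exp_pos _
  have h4 : (0:ℝ) < 2 * ε ^ 2 := by positivity
  have h5 : (0:ℝ) < 2 * ε ^ 3 := by positivity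
  constructor
  · rw [div_sub_div_same, sub_sub_sub_cancel_left]
    exact div_nonneg (by linarith) h4.le
  · rw [div_sub_div_same, sub_sub_sub_cancel_left, div_le_div_iff₀ h4 h5]
    have key : Real.exp (-a/ε) - Real.exp (-b/ε) ≤ (b - a) / ε := by
      rw [hfac]
      have h6 : 1 - Real.exp ((a-b)/ε) ≤ (b - a)/ε := by
        have : -((a-b)/ε) = (b-a)/ε := by ring
        linarith [this ▸ (by linarith : 1 - Real.exp ((a-b)/ε) ≤ -((a-b)/ε))]
      have h7 : 0 ≤ 1 - Real.exp ((a-b)/ε) := by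
        have : Real.exp ((a-b)/ε) ≤ 1 := Real.exp_le_one_iff.2
          (div_nonpos_of_nonpos_of_nonneg (by linarith) hε.le)
        linarith
      calc Real.exp (-a/ε) - Real.exp (-a/ε) * Real.exp ((a-b)/ε)
          = Real.exp (-a/ε) * (1 - Real.exp ((a-b)/ε)) := by ring
        _ ≤ 1 * ((b - a)/ε) := mul_le_mul hu h6 h7 (by norm_num)
        _ = (b - a)/ε := by ring
    calc (Real.exp (-a/ε) - Real.exp (-b/ε)) * (2 * ε ^ 3)
        ≤ (b - a)/ε * (2 * ε ^ 3) := mul_le_mul_of_nonneg_right key h5.le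
      _ = (b - a) * (2 * ε ^ 2) := by field_simp

lemma Sderiv_key (ε : ℝ) (hε : 0 < ε) {a b : ℝ} (hab : a ≤ b) :
    0 ≤ Sderiv ε b - Sderiv ε a ∧ Sderiv ε b - Sderiv ε a ≤ (b - a) / (2 * ε ^ 3) := by
  rcases le_or_gt 0 a with ha | ha
  · exact Sderiv_key_nonneg_case ε hε ha hab
  rcases le_or_gt b 0 with hb | hb
  · have h := Sderiv_key_nonneg_case ε hε (by linarith : (0:ℝ) ≤ -b) (by linarith : -b ≤ -a)
    rw [Sderiv_neg', Sderiv_neg'] at h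
    have he : (-a - -b) / (2*ε^3) = (b - a) / (2*ε^3) := by ring
    constructor
    · linarith [h.1]
    · linarith [h.2, he.le, he.ge]
  · have h1 := Sderiv_key_nonneg_case ε hε (le_refl (0:ℝ)) hb.le
    have h2 := Sderiv_key_nonneg_case ε hε (le_refl (0:ℝ)) (by linarith : (0:ℝ) ≤ -a)
    rw [Sderiv_neg'] at h2
    rw [Sderiv_zero] at h1 h2
    have he : (b - 0)/(2*ε^3) + (-a - 0)/(2*ε^3) = (b - a)/(2*ε^3) := by ring
    constructor
    · linarith [h1.1, h2.1]
    · linarith [h1.2, h2.2]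

/-- If `X(·,t)` is nondecreasing on `[0,1]` for all `t ≥ 0` and solves
`∂_t X(z,t) = (2z-1)/(2ε²) - ∫₀¹ S_ε'(X(z,t) - X(ζ,t)) dζ`, then for `0 ≤ z₁ < z₂ ≤ 1`
and `t ≥ 0`,
`X(z₂,t) - X(z₁,t) ≥ e^{-t/(2ε³)}(X(z₂,0) - X(z₁,0)) + 2ε(z₂-z₁)(1 - e^{-t/(2ε³)})`;
in particular `X(·,t)` is strictly increasing on `[0,1]` for every `t > 0`. -/
theorem stmt1 (ε : ℝ) (hε : 0 < ε) (X : ℝ → ℝ → ℝ)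
    (hmono : ∀ t : ℝ, 0 ≤ t → MonotoneOn (fun z => X z t) (Set.Icc 0 1))
    (hdiff : ∀ z ∈ Set.Icc (0:ℝ) 1, ∀ t : ℝ, 0 ≤ t →
      HasDerivWithinAt (fun s => X z s)
        ((2 * z - 1) / (2 * ε ^ 2) - ∫ ζ in (0:ℝ)..1, Sderiv ε (X z t - X ζ t))
        (Set.Ici 0) t) :
    (∀ z₁ z₂ : ℝ, 0 ≤ z₁ → z₁ < z₂ → z₂ ≤ 1 → ∀ t : ℝ, 0 ≤ t →
      X z₂ t - X z₁ t ≥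
        Real.exp (-t / (2 * ε ^ 3)) * (X z₂ 0 - X z₁ 0) +
          2 * ε * (z₂ - z₁) * (1 - Real.exp (-t / (2 * ε ^ 3)))) ∧
    (∀ t : ℝ, 0 < t → StrictMonoOn (fun z => X z t) (Set.Icc 0 1)) := by
  have hε3 : (0:ℝ) < 2 * ε ^ 3 := by positivity
  -- integrability
  have hInt : ∀ z ∈ Icc (0:ℝ) 1, ∀ t : ℝ, 0 ≤ t →
      IntervalIntegrable (fun ζ => Sderiv ε (X z t - X ζ t)) volume 0 1 := by
    intro z hz t ht
    rw [intervalIntegrable_iff_integrableOn_Ioc_of_le zero_le_one]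
    have hXm : AEMeasurable (fun ζ => X ζ t) (volume.restrict (Set.Ioc 0 1)) := by
      have h := aemeasurable_restrict_of_monotoneOn (μ := volume) measurableSet_Icc (hmono t ht)
      exact h.mono_measure (Measure.restrict_mono Ioc_subset_Icc_self le_rfl)
    have hm : AEStronglyMeasurable (fun ζ => Sderiv ε (X z t - X ζ t))
        (volume.restrict (Set.Ioc 0 1)) :=
      ((measurable_Sderiv ε).comp_aemeasurable (aemeasurable_const.sub hXm)).aestronglyMeasurable
    refine ⟨hm, ?_⟩
    apply MeasureTheory.HasFiniteIntegral.of_bounded (C := 1 / (2 * ε ^ 2))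
    filter_upwards with ζ
    simpa [Real.norm_eq_abs] using Sderiv_abs_le ε hε _
  have key : ∀ z₁ z₂ : ℝ, 0 ≤ z₁ → z₁ < z₂ → z₂ ≤ 1 → ∀ t : ℝ, 0 ≤ t →
      X z₂ t - X z₁ t ≥
        Real.exp (-t / (2 * ε ^ 3)) * (X z₂ 0 - X z₁ 0) +
          2 * ε * (z₂ - z₁) * (1 - Real.exp (-t / (2 * ε ^ 3))) := by
    intro z₁ z₂ hz₁ hlt hz₂ t ht
    have hz1m : z₁ ∈ Icc (0:ℝ) 1 := ⟨hz₁, by linarith⟩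
    have hz2m : z₂ ∈ Icc (0:ℝ) 1 := ⟨by linarith, hz₂⟩
    have hud : ∀ s : ℝ, 0 ≤ s → HasDerivWithinAt (fun r => X z₂ r - X z₁ r)
        (((2 * z₂ - 1) / (2 * ε ^ 2) - ∫ ζ in (0:ℝ)..1, Sderiv ε (X z₂ s - X ζ s))
          - ((2 * z₁ - 1) / (2 * ε ^ 2) - ∫ ζ in (0:ℝ)..1, Sderiv ε (X z₁ s - X ζ s)))
        (Ici 0) s := fun s hs => (hdiff z₂ hz2m s hs).sub (hdiff z₁ hz1m s hs)
    have hunn : ∀ s : ℝ, 0 ≤ s → 0 ≤ X z₂ s - X z₁ s := fun s hs =>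
      sub_nonneg.2 (hmono s hs hz1m hz2m hlt.le)
    -- the lower bound on the derivative
    have hdlb : ∀ s : ℝ, 0 ≤ s →
        (2 * ε * (z₂ - z₁) - (X z₂ s - X z₁ s)) / (2 * ε ^ 3) ≤
        ((2 * z₂ - 1) / (2 * ε ^ 2) - ∫ ζ in (0:ℝ)..1, Sderiv ε (X z₂ s - X ζ s))
          - ((2 * z₁ - 1) / (2 * ε ^ 2) - ∫ ζ in (0:ℝ)..1, Sderiv ε (X z₁ s - X ζ s)) := by
      intro s hs
      have hIle : (∫ ζ in (0:ℝ)..1, Sderiv ε (X z₂ s - X ζ s)) -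
          (∫ ζ in (0:ℝ)..1, Sderiv ε (X z₁ s - X ζ s)) ≤ (X z₂ s - X z₁ s) / (2 * ε ^ 3) := by
        rw [← intervalIntegral.integral_sub (hInt z₂ hz2m s hs) (hInt z₁ hz1m s hs)]
        have hmle := intervalIntegral.integral_mono_on (μ := volume)
          (f := fun ζ => Sderiv ε (X z₂ s - X ζ s) - Sderiv ε (X z₁ s - X ζ s))
          (g := fun _ => (X z₂ s - X z₁ s) / (2 * ε ^ 3)) zero_le_one
          ((hInt z₂ hz2m s hs).sub (hInt z₁ hz1m s hs)) intervalIntegrable_const ?_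
        · simpa using hmle
        · intro ζ hζ
          have hab : X z₁ s - X ζ s ≤ X z₂ s - X ζ s := by linarith [hunn s hs]
          have h := (Sderiv_key ε hε hab).2
          have he : (X z₂ s - X ζ s) - (X z₁ s - X ζ s) = X z₂ s - X z₁ s := by ring
          rw [he] at h
          exact h
      have hKd : (2 * ε * (z₂ - z₁)) / (2 * ε ^ 3)
          = (2 * z₂ - 1) / (2 * ε ^ 2) - (2 * z₁ - 1) / (2 * ε ^ 2) := by
        field_simp
        ring
      have hsd := sub_div (2 * ε * (z₂ - z₁)) (X z₂ s - X z₁ s) (2 * ε ^ 3)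
      linarith [hIle, hKd.le, hKd.ge, hsd.le, hsd.ge]
    -- the Gronwall function
    have hgd : ∀ s : ℝ, 0 ≤ s → HasDerivWithinAt
        (fun r => Real.exp (r / (2 * ε ^ 3)) * ((X z₂ r - X z₁ r) - 2 * ε * (z₂ - z₁)))
        (Real.exp (s / (2 * ε ^ 3)) * (1 / (2 * ε ^ 3)) * ((X z₂ s - X z₁ s) - 2 * ε * (z₂ - z₁))
          + Real.exp (s / (2 * ε ^ 3)) *
            (((2 * z₂ - 1) / (2 * ε ^ 2) - ∫ ζ in (0:ℝ)..1, Sderiv ε (X z₂ s - X ζ s))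
              - ((2 * z₁ - 1) / (2 * ε ^ 2) - ∫ ζ in (0:ℝ)..1, Sderiv ε (X z₁ s - X ζ s))))
        (Ici 0) s := by
      intro s hs
      have h1 : HasDerivAt (fun r : ℝ => r / (2 * ε ^ 3)) (1 / (2 * ε ^ 3)) s := by
        exact (hasDerivAt_id s).div_const (2 * ε ^ 3)
      have he : HasDerivAt (fun r : ℝ => Real.exp (r / (2 * ε ^ 3)))
          (Real.exp (s / (2 * ε ^ 3)) * (1 / (2 * ε ^ 3))) s :=
        (Real.hasDerivAt_exp _).comp s h1
      exact he.hasDerivWithinAt.mul ((hud s hs).sub_const (2 * ε * (z₂ - z₁)))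
    have hgm : MonotoneOn
        (fun r => Real.exp (r / (2 * ε ^ 3)) * ((X z₂ r - X z₁ r) - 2 * ε * (z₂ - z₁)))
        (Ici 0) := by
      apply monotoneOn_of_hasDerivWithinAt_nonneg (convex_Ici 0)
        (f' := fun s =>
          Real.exp (s / (2 * ε ^ 3)) * (1 / (2 * ε ^ 3)) * ((X z₂ s - X z₁ s) - 2 * ε * (z₂ - z₁))
          + Real.exp (s / (2 * ε ^ 3)) *
            (((2 * z₂ - 1) / (2 * ε ^ 2) - ∫ ζ in (0:ℝ)..1, Sderiv ε (X z₂ s - X ζ s))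
              - ((2 * z₁ - 1) / (2 * ε ^ 2) - ∫ ζ in (0:ℝ)..1, Sderiv ε (X z₁ s - X ζ s))))
        (fun s hs => (hgd s hs).continuousWithinAt) ?_ ?_
      · intro s hs
        rw [interior_Ici] at hs
        exact (hgd s (le_of_lt hs)).mono (by rw [interior_Ici]; exact Ioi_subset_Ici_self)
      · intro s hs
        rw [interior_Ici] at hs
        have hs' : (0:ℝ) ≤ s := le_of_lt hs
        have h1 := hdlb s hs'
        have hepos := Real.exp_pos (s / (2 * ε ^ 3))
        have e2 := mul_le_mul_of_nonneg_left h1 hepos.le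
        have e1 : Real.exp (s / (2 * ε ^ 3)) * (1 / (2 * ε ^ 3))
              * ((X z₂ s - X z₁ s) - 2 * ε * (z₂ - z₁))
            = - (Real.exp (s / (2 * ε ^ 3)) *
              ((2 * ε * (z₂ - z₁) - (X z₂ s - X z₁ s)) / (2 * ε ^ 3))) := by
          field_simp
          ring
        linarith [e1.le, e1.ge, e2]
    -- conclude
    have h0t := hgm (self_mem_Ici) (mem_Ici.2 ht) ht
    simp only [zero_div, Real.exp_zero, one_mul] at h0t
    have hE : Real.exp (-t / (2 * ε ^ 3)) * Real.exp (t / (2 * ε ^ 3)) = 1 := by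
      have hz : -t / (2 * ε ^ 3) + t / (2 * ε ^ 3) = 0 := by ring
      rw [← Real.exp_add, hz, Real.exp_zero]
    have hEpos := Real.exp_pos (-t / (2 * ε ^ 3))
    have h2 := mul_le_mul_of_nonneg_left h0t hEpos.le
    have h3 : Real.exp (-t / (2 * ε ^ 3)) * (Real.exp (t / (2 * ε ^ 3))
          * ((X z₂ t - X z₁ t) - 2 * ε * (z₂ - z₁)))
        = (X z₂ t - X z₁ t) - 2 * ε * (z₂ - z₁) := by
      rw [← mul_assoc, hE, one_mul]
    rw [h3] at h2
    nlinarith [h2]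
  refine ⟨key, ?_⟩
  intro t ht a ha b hb hab
  have h := key a b ha.1 hab hb.2 t ht.le
  have h0 : X a 0 ≤ X b 0 := hmono 0 le_rfl ha hb hab.le
  have hE1 : Real.exp (-t / (2 * ε ^ 3)) < 1 := by
    rw [Real.exp_lt_one_iff]
    have : 0 < t / (2 * ε ^ 3) := div_pos ht hε3
    have hnd : -t / (2 * ε ^ 3) = -(t / (2 * ε ^ 3)) := by ring
    linarith
  have hEpos := Real.exp_pos (-t / (2 * ε ^ 3))
  have hterm : 0 < 2 * ε * (b - a) * (1 - Real.exp (-t / (2 * ε ^ 3))) := by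
    exact mul_pos (mul_pos (by linarith : (0:ℝ) < 2 * ε) (by linarith : (0:ℝ) < b - a)) (by linarith)
  have hterm2 : 0 ≤ Real.exp (-t / (2 * ε ^ 3)) * (X b 0 - X a 0) :=
    mul_nonneg hEpos.le (sub_nonneg.2 h0)
  show X a t < X b t
  linarith [h, hterm, hterm2]
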